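/- Let S be a finite set of open unit hemispheres. If the union of S covers the entire unit sphere S^2, then there exists a subset R of S of cardinality 4, 5, or 6 whose union still covers S^2. -/

import Mathlib

open scoped RealInnerProductSpace

/-- The unit sphere `S² ⊆ ℝ³`. -/
noncomputable def unitSphere : Set (EuclideanSpace ℝ (Fin 3)) := Metric.sphere 0 1

/-- The open unit hemisphere of `S²` determined by a (unit) vector `v`. -/
noncomputable def openHemisphere (v : EuclideanSpace ℝ (Fin 3)) :
    Set (EuclideanSpace ℝ (Fin 3)) := {x ∈ unitSphere | 0 < ⟪v, x⟫}

/-!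
Call a finite family `v` in a real inner product space `E` of dimension `n` a hemisphere cover if
every `x ≠ 0` has `0 < ⟪v i, x⟫` for some `i`. Such a family spans `E`, and it cannot be linearly
independent (otherwise the dual functional `-∑ coordᵢ` would be negative on all of it), so it has
at least `n + 1` members.

For the bound `2n` (Steinitz): `0` lies in the convex hull of the nonzero `v i`, since a functional
separating it would be negative on all of them, and Carathéodory's theorem gives `m` of them, spanning a
subspace `L` of dimension `k ≥ 1` with `m ≤ k + 1`, some positive combination of which vanishes.
A vector having non-positive inner product with all of these is orthogonal to `L`, so it suffices
to add a hemisphere cover of `Lᗮ` by the projections of the `v i`, which by induction on the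
dimension needs at most `2(n - k)` members; in total `m + 2(n - k) ≤ 2n`.
-/

open Module Submodule Finset

section

variable {ι E : Type*} [NormedAddCommGroup E] [InnerProductSpace ℝ E]

def HemispheresCover (s : Finset ι) (v : ι → E) : Prop :=
  ∀ x : E, x ≠ 0 → ∃ i ∈ s, 0 < ⟪v i, x⟫

variable {s : Finset ι} {v : ι → E}

theorem HemispheresCover.exists_subset_ne_zero (h : HemispheresCover s v) :
    ∃ s' ⊆ s, (∀ i ∈ s', v i ≠ 0) ∧ HemispheresCover s' v := by
  classical
  refine ⟨s.filter (v · ≠ 0), filter_subset _ _, fun i hi => (mem_filter.mp hi).2, fun x hx => ?_⟩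
  obtain ⟨i, hi, hpos⟩ := h x hx
  refine ⟨i, mem_filter.mpr ⟨hi, fun h0 => ?_⟩, hpos⟩
  simp [h0] at hpos

theorem HemispheresCover.orthogonalProjectionOnto (h : HemispheresCover s v)
    (K : Submodule ℝ E) [K.HasOrthogonalProjection] :
    HemispheresCover s (fun i => K.orthogonalProjectionOnto (v i)) := by
  intro x hx
  obtain ⟨i, hi, hpos⟩ := h x (by simpa using hx)
  exact ⟨i, hi, by rwa [inner_orthogonalProjectionOnto_eq_of_mem_right]⟩

theorem mem_orthogonal_span_of_inner_nonpos {w : ι → ℝ} (hw : ∀ i ∈ s, 0 < w i)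
    (hwv : ∑ i ∈ s, w i • v i = 0) {x : E} (hx : ∀ i ∈ s, ⟪v i, x⟫ ≤ 0) :
    x ∈ (span ℝ (v '' s))ᗮ := by
  have hsum : ∑ i ∈ s, w i * ⟪v i, x⟫ = 0 := by
    simp only [← real_inner_smul_left, ← sum_inner, hwv, inner_zero_left]
  rw [sum_eq_zero_iff_of_nonpos fun i hi =>
    mul_nonpos_of_nonneg_of_nonpos (hw i hi).le (hx i hi)] at hsum
  have hker : span ℝ (v '' s) ≤ LinearMap.ker (innerₛₗ ℝ x) := by
    rw [span_le]
    rintro _ ⟨i, hi, rfl⟩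
    simp only [SetLike.mem_coe, LinearMap.mem_ker, innerₛₗ_apply_apply]
    rw [real_inner_comm]
    exact (mul_eq_zero.mp (hsum i hi)).resolve_left (hw i hi).ne'
  exact (mem_orthogonal' _ _).mpr fun u hu => hker hu

theorem exists_subset_pos_combination_eq_zero (h : (0 : E) ∈ convexHull ℝ (v '' s)) :
    ∃ t ⊆ s, t.Nonempty ∧ #t ≤ finrank ℝ (span ℝ (v '' t)) + 1 ∧
      ∃ w : ι → ℝ, (∀ i ∈ t, 0 < w i) ∧ ∑ i ∈ t, w i • v i = 0 := by
  classical
  obtain ⟨κ, _, z, w, hzs, hz, hw, hw1, hwz⟩ := eq_pos_convex_span_of_mem_convexHull h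
  have : Nonempty κ := by
    by_contra hκ
    simp [not_nonempty_iff.mp hκ] at hw1
  choose g hgs hgz using fun j => hzs (Set.mem_range_self j)
  have hg : Function.Injective g := fun a b hab => hz.injective (by rw [← hgz a, ← hgz b, hab])
  have hrange : v '' ↑(univ.image g) = Set.range z := by
    rw [coe_image, coe_univ, Set.image_univ, ← Set.range_comp]
    exact congrArg Set.range (funext hgz)
  refine ⟨univ.image g, fun i hi => ?_, univ_nonempty.image g, ?_,
    Function.extend g w 0, fun i hi => ?_, ?_⟩
  · obtain ⟨j, -, rfl⟩ := mem_image.mp hi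
    exact hgs j
  · have hle : vectorSpan ℝ (Set.range z) ≤ span ℝ (Set.range z) := by
      rw [vectorSpan_def, span_le]
      rintro _ ⟨p, hp, q, hq, rfl⟩
      exact sub_mem (subset_span hp) (subset_span hq)
    have := FiniteDimensional.span_of_finite ℝ (Set.finite_range z)
    rw [card_image_of_injective _ hg, card_univ, ← hz.finrank_vectorSpan_add_one, hrange]
    exact Nat.add_le_add_right (finrank_mono hle) 1
  · obtain ⟨j, -, rfl⟩ := mem_image.mp hi
    rw [hg.extend_apply]
    exact hw j
  · rw [sum_image fun a _ b _ hab => hg hab]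
    simpa only [hg.extend_apply, hgz] using hwz

variable [FiniteDimensional ℝ E]

theorem HemispheresCover.span_eq_top (h : HemispheresCover s v) :
    span ℝ (Set.range fun i : s => v i) = ⊤ := by
  by_contra hne
  obtain ⟨x, hx, hx0⟩ := exists_mem_ne_zero_of_ne_bot (orthogonal_eq_bot_iff.not.mpr hne)
  obtain ⟨i, hi, hpos⟩ := h x hx0
  rw [(mem_orthogonal _ x).mp hx (v i) (subset_span (Set.mem_range_self (⟨i, hi⟩ : s)))] at hpos
  exact hpos.false

theorem HemispheresCover.zero_mem_convexHull [Nontrivial E] (h : HemispheresCover s v) :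
    (0 : E) ∈ convexHull ℝ (v '' s) := by
  by_contra h0
  obtain ⟨f, u, hf, hu⟩ := geometric_hahn_banach_closed_point (convex_convexHull ℝ _)
    ((s.finite_toSet.image v).isCompact_convexHull ℝ).isClosed h0
  set y := (InnerProductSpace.toDual ℝ E).symm f
  have hy : ∀ i ∈ s, ⟪v i, y⟫ < 0 := fun i hi => by
    rw [real_inner_comm, InnerProductSpace.toDual_symm_apply]
    have := hf (v i) (subset_convexHull ℝ _ (Set.mem_image_of_mem v hi))
    simp only [map_zero] at hu
    linarith
  obtain ⟨x, hx⟩ := exists_ne (0 : E)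
  obtain ⟨i, hi, -⟩ := h x hx
  have hy0 : y ≠ 0 := fun hy0 => by simpa [hy0] using hy i hi
  obtain ⟨j, hj, hpos⟩ := h y hy0
  exact (hy j hj).not_gt hpos

theorem HemispheresCover.not_linearIndependent [Nontrivial E] (h : HemispheresCover s v) :
    ¬ LinearIndependent ℝ (fun i : s => v i) := by
  intro hli
  let b := Basis.mk hli h.span_eq_top.ge
  set y := (InnerProductSpace.toDual ℝ E).symm (-b.sumCoords).toContinuousLinearMap
  have hy : ∀ i ∈ s, ⟪v i, y⟫ = -1 := fun i hi => by
    rw [real_inner_comm, InnerProductSpace.toDual_symm_apply]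
    have : b ⟨i, hi⟩ = v i := Basis.mk_apply _ _ _
    simp only [← this, LinearMap.coe_toContinuousLinearMap', LinearMap.neg_apply,
      Basis.sumCoords_self_apply]
  obtain ⟨x, hx⟩ := exists_ne (0 : E)
  obtain ⟨i, hi, -⟩ := h x hx
  have hy0 : y ≠ 0 := fun hy0 => by simpa [hy0] using hy i hi
  obtain ⟨j, hj, hpos⟩ := h y hy0
  linarith [hy j hj]

theorem HemispheresCover.finrank_lt_card [Nontrivial E] (h : HemispheresCover s v) :
    finrank ℝ E < #s := by
  have hrank : Set.finrank ℝ (Set.range fun i : s => v i) = finrank ℝ E := by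
    rw [Set.finrank, h.span_eq_top, finrank_top]
  have hcard := finrank_range_le_card (R := ℝ) (fun i : s => v i)
  have hne := mt linearIndependent_iff_card_eq_finrank_span.mpr h.not_linearIndependent
  rw [hrank, Fintype.card_coe] at *
  omega

theorem HemispheresCover.exists_subset_card_le_two_mul_finrank (h : HemispheresCover s v) :
    ∃ t ⊆ s, #t ≤ 2 * finrank ℝ E ∧ HemispheresCover t v := by
  classical
  induction hn : finrank ℝ E using Nat.strong_induction_on generalizing E with
  | _ n ih =>
  rcases (finrank ℝ E).eq_zero_or_pos with h0 | hpos
  · have := finrank_zero_iff.mp h0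
    exact ⟨∅, empty_subset _, by simp, fun x hx => absurd (Subsingleton.elim x 0) hx⟩
  have : Nontrivial E := finrank_pos_iff.mp hpos
  obtain ⟨s', hs's, hs'0, hs'⟩ := h.exists_subset_ne_zero
  obtain ⟨t, hts', ⟨i, hi⟩, htcard, w, hw, hwv⟩ :=
    exists_subset_pos_combination_eq_zero hs'.zero_mem_convexHull
  set L := span ℝ (v '' t)
  have hL : 1 ≤ finrank ℝ L := one_le_finrank_iff.mpr fun hbot =>
    hs'0 i (hts' hi) ((mem_bot ℝ).mp (hbot ▸ subset_span (Set.mem_image_of_mem v hi)))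
  have hLperp := L.finrank_add_finrank_orthogonal
  obtain ⟨t', ht's, ht'card, ht'⟩ := ih _ (by omega) (h.orthogonalProjectionOnto Lᗮ) rfl
  refine ⟨t ∪ t', union_subset (hts'.trans hs's) ht's, ?_, fun x hx => ?_⟩
  · -- `#t ≤ finrank L + 1 ≤ 2 * finrank L`
    have := card_union_le t t'
    omega
  by_contra! hneg
  have hxL : x ∈ Lᗮ :=
    mem_orthogonal_span_of_inner_nonpos hw hwv fun i hi => hneg i (mem_union_left _ hi)
  obtain ⟨j, hj, hpos⟩ := ht' ⟨x, hxL⟩ (by simpa using hx)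
  rw [inner_orthogonalProjectionOnto_eq_of_mem_right] at hpos
  exact (hneg j (mem_union_right _ hj)).not_gt hpos

end

theorem subset_iUnion_openHemisphere_iff (B : Finset (EuclideanSpace ℝ (Fin 3))) :
    unitSphere ⊆ ⋃ v ∈ B, openHemisphere v ↔ HemispheresCover B id := by
  constructor
  · intro h x hx
    have hxn : ‖x‖⁻¹ • x ∈ unitSphere := by
      simp [unitSphere, norm_smul, hx]
    obtain ⟨v, hv, hvx⟩ := Set.mem_iUnion₂.mp (h hxn)
    refine ⟨v, hv, ?_⟩
    have := hvx.2
    rw [real_inner_smul_right] at this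
    exact pos_of_mul_pos_right this (by positivity)
  · intro h x hx
    obtain ⟨v, hv, hvx⟩ := h x (ne_zero_of_mem_sphere one_ne_zero ⟨x, hx⟩)
    exact Set.mem_biUnion hv ⟨hx, hvx⟩

theorem hemispheres_cover_sphere_general
    (S : Finset (EuclideanSpace ℝ (Fin 3)))
    (hcover : unitSphere ⊆ ⋃ v ∈ S, openHemisphere v) :
    ∃ R ⊆ S, (R.card = 4 ∨ R.card = 5 ∨ R.card = 6) ∧
      unitSphere ⊆ ⋃ v ∈ R, openHemisphere v := by
  obtain ⟨R, hRS, hR6, hR⟩ :=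
    ((subset_iUnion_openHemisphere_iff S).mp hcover).exists_subset_card_le_two_mul_finrank
  have hR4 := hR.finrank_lt_card
  rw [finrank_euclideanSpace_fin] at hR6 hR4
  exact ⟨R, hRS, by omega, (subset_iUnion_openHemisphere_iff R).mpr hR⟩

/-- If a finite set of open unit hemispheres covers the unit sphere `S²`,
then four, five or six of them already cover it. -/
theorem hemispheres_cover_sphere
    (S : Finset (EuclideanSpace ℝ (Fin 3))) (hS : ∀ v ∈ S, ‖v‖ = 1)
    (hcover : unitSphere ⊆ ⋃ v ∈ S, openHemisphere v) :
    ∃ R ⊆ S, (R.card = 4 ∨ R.card = 5 ∨ R.card = 6) ∧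
      unitSphere ⊆ ⋃ v ∈ R, openHemisphere v :=
  hemispheres_cover_sphere_general S hcover
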